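/- For every z in ℂ \ [1,∞) one has Re F(z) > 0 (in particular F(z) ≠ 0 and |Arg F(z)| < π/2); F(x) is real and positive for every real x < 1; and Im F(z) > 0 whenever Im z > 0, while Im F(z) < 0 whenever Im z < 0 (i.e. F is a Nevanlinna–Pick function holomorphic across (-∞,1)). -/

import Mathlib

open Complex

/-- The Gauss hypergeometric function `F(1/2,1/2;1;z)`, defined on `ℂ \ [1,∞)`
via the Euler integral `F(z) = (1/π)∫₀¹ dt/√(t(1-t)(1-tz))` (principal branch). -/
noncomputable def Fhyp (z : ℂ) : ℂ :=
  (Real.pi : ℂ)⁻¹ * ∫ t in (0:ℝ)..1, ((t : ℂ) * (1 - (t : ℂ)) * (1 - (t : ℂ) * z)) ^ (-(1/2) : ℂ)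

open MeasureTheory Set

/-- im of the linear factor. -/
lemma lin_im (z : ℂ) (t : ℝ) : ((1:ℂ) - (t:ℂ)*z).im = -(t * z.im) := by simp

lemma lin_re (z : ℂ) (t : ℝ) : ((1:ℂ) - (t:ℂ)*z).re = 1 - t * z.re := by simp

lemma lin_ne (z : ℂ) (hz : z.im ≠ 0 ∨ z.re < 1) {t : ℝ} (ht0 : 0 < t) (ht1 : t ≤ 1) :
    (1:ℂ) - (t:ℂ)*z ≠ 0 := by
  intro h
  rcases hz with h1 | h1
  · have h2 : ((1:ℂ) - (t:ℂ)*z).im = 0 := by rw [h]; simp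
    rw [lin_im] at h2
    exact mul_ne_zero ht0.ne' h1 (by linarith)
  · have h2 : 1 - t * z.re = 0 := by rw [← lin_re z t, h]; simp
    nlinarith [mul_pos ht0 (sub_pos.mpr h1)]

lemma lin_arg_ne (z : ℂ) (hz : z.im ≠ 0 ∨ z.re < 1) {t : ℝ} (ht0 : 0 < t) (ht1 : t ≤ 1) :
    ((1:ℂ) - (t:ℂ)*z).arg ≠ Real.pi := by
  intro h
  rw [Complex.arg_eq_pi_iff, lin_re, lin_im] at h
  rcases hz with h1 | h1
  · have := h.2
    simp at this
    rcases this with h2 | h2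
    · exact ht0.ne' h2
    · exact h1 h2
  · nlinarith [h.1, mul_pos ht0 (sub_pos.mpr h1)]

lemma base_eq (z : ℂ) (t : ℝ) :
    (t : ℂ) * (1 - (t : ℂ)) * (1 - (t : ℂ) * z)
      = ((t*(1-t) : ℝ) : ℂ) * ((1:ℂ) - (t:ℂ)*z) := by push_cast; ring

lemma log_mul_half_im (w : ℂ) :
    (Complex.log w * (-(1/2):ℂ)).im = w.arg * (-(1/2)) := by
  rw [Complex.mul_im]
  simp [Complex.log_im]

lemma re_cpow_pos {w : ℂ} (hw : w ≠ 0) (h : w.arg ≠ Real.pi) :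
    0 < (w ^ (-(1/2):ℂ)).re := by
  rw [Complex.cpow_def_of_ne_zero hw, Complex.exp_re, log_mul_half_im]
  have hlt : w.arg < Real.pi := (Complex.arg_le_pi w).lt_of_ne h
  have hgt := Complex.neg_pi_lt_arg w
  have hcos : 0 < Real.cos (w.arg * (-(1/2))) :=
    Real.cos_pos_of_mem_Ioo ⟨by nlinarith, by nlinarith⟩
  exact mul_pos (Real.exp_pos _) hcos

lemma im_cpow_pos {w : ℂ} (hw : w.im < 0) : 0 < (w ^ (-(1/2):ℂ)).im := by
  have hw0 : w ≠ 0 := by intro h; rw [h] at hw; simp at hw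
  rw [Complex.cpow_def_of_ne_zero hw0, Complex.exp_im, log_mul_half_im]
  have harg : w.arg < 0 := Complex.arg_neg_iff.mpr hw
  have hgt := Complex.neg_pi_lt_arg w
  have hπ := Real.pi_pos
  exact mul_pos (Real.exp_pos _)
    (Real.sin_pos_of_pos_of_lt_pi (by nlinarith) (by nlinarith))

lemma im_cpow_neg {w : ℂ} (hw : 0 < w.im) : (w ^ (-(1/2):ℂ)).im < 0 := by
  have hw0 : w ≠ 0 := by intro h; rw [h] at hw; simp at hw
  rw [Complex.cpow_def_of_ne_zero hw0, Complex.exp_im, log_mul_half_im]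
  have harg0 : 0 ≤ w.arg := Complex.arg_nonneg_iff.mpr hw.le
  have harg : 0 < w.arg := harg0.lt_of_ne (by
    intro h
    have := Complex.arg_eq_zero_iff.mp h.symm
    exact hw.ne' this.2)
  have hle := Complex.arg_le_pi w
  have hπ := Real.pi_pos
  exact mul_neg_of_pos_of_neg (Real.exp_pos _)
    (Real.sin_neg_of_neg_of_neg_pi_lt (by nlinarith) (by nlinarith))

lemma integrand_re_pos (z : ℂ) (hz : z.im ≠ 0 ∨ z.re < 1) {t : ℝ} (ht : t ∈ Ioo (0:ℝ) 1) :
    0 < ((((t:ℂ) * (1 - (t:ℂ)) * (1 - (t:ℂ)*z))) ^ (-(1/2):ℂ)).re := by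
  have hp : 0 < t * (1-t) := mul_pos ht.1 (by linarith [ht.2])
  rw [base_eq]
  apply re_cpow_pos
  · exact mul_ne_zero (by exact_mod_cast hp.ne') (lin_ne z hz ht.1 ht.2.le)
  · rw [Complex.arg_real_mul _ hp]
    exact lin_arg_ne z hz ht.1 ht.2.le

lemma integrand_im_pos (z : ℂ) (hz : 0 < z.im) {t : ℝ} (ht : t ∈ Ioo (0:ℝ) 1) :
    0 < ((((t:ℂ) * (1 - (t:ℂ)) * (1 - (t:ℂ)*z))) ^ (-(1/2):ℂ)).im := by
  have hp : 0 < t * (1-t) := mul_pos ht.1 (by linarith [ht.2])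
  rw [base_eq]
  apply im_cpow_pos
  rw [Complex.im_ofReal_mul, lin_im]
  exact mul_neg_of_pos_of_neg hp (by nlinarith [mul_pos ht.1 hz])

lemma integrand_im_neg (z : ℂ) (hz : z.im < 0) {t : ℝ} (ht : t ∈ Ioo (0:ℝ) 1) :
    ((((t:ℂ) * (1 - (t:ℂ)) * (1 - (t:ℂ)*z))) ^ (-(1/2):ℂ)).im < 0 := by
  have hp : 0 < t * (1-t) := mul_pos ht.1 (by linarith [ht.2])
  rw [base_eq]
  apply im_cpow_neg
  rw [Complex.im_ofReal_mul, lin_im]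
  have : 0 < t * z.im * (-1) := by nlinarith [ht.1]
  nlinarith

lemma integrable_aux (z : ℂ) (hz : z.im ≠ 0 ∨ z.re < 1) :
    IntervalIntegrable
      (fun t : ℝ => ((t:ℂ) * (1 - (t:ℂ)) * (1 - (t:ℂ)*z)) ^ (-(1/2):ℂ)) volume 0 1 := by
  have hcont : ContinuousOn (fun t : ℝ => ‖(1:ℂ) - (t:ℂ)*z‖) (Icc (0:ℝ) 1) := by
    apply Continuous.continuousOn
    exact continuous_norm.comp (by continuity)
  obtain ⟨t₀, ht₀, hmin⟩ :=
    isCompact_Icc.exists_isMinOn (nonempty_Icc.mpr zero_le_one) hcont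
  set c := ‖(1:ℂ) - (t₀:ℂ)*z‖ with hc
  have hc0 : 0 < c := by
    rw [hc]
    apply norm_pos_iff.mpr
    rcases ht₀.1.eq_or_lt with h | h
    · rw [← h]; norm_num
    · exact lin_ne z hz h ht₀.2
  have hbeta : IntervalIntegrable
      (fun t : ℝ => (t:ℂ) ^ ((1/2:ℂ)-1) * (1-(t:ℂ)) ^ ((1/2:ℂ)-1)) volume 0 1 :=
    Complex.betaIntegral_convergent (by norm_num) (by norm_num)
  have hdom : IntervalIntegrable
      (fun t : ℝ => c ^ (-(1/2):ℝ) * ‖(t:ℂ) ^ ((1/2:ℂ)-1) * (1-(t:ℂ)) ^ ((1/2:ℂ)-1)‖)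
      volume 0 1 := hbeta.norm.const_mul _
  apply hdom.mono_fun
  · -- measurability
    have hb : Measurable (fun t : ℝ => (t:ℂ) * (1 - (t:ℂ)) * (1 - (t:ℂ)*z)) :=
      (by continuity : Continuous fun t : ℝ => (t:ℂ) * (1 - (t:ℂ)) * (1 - (t:ℂ)*z)).measurable
    have heq : (fun t : ℝ => ((t:ℂ) * (1 - (t:ℂ)) * (1 - (t:ℂ)*z)) ^ (-(1/2):ℂ))
        = fun t : ℝ => if (t:ℂ) * (1 - (t:ℂ)) * (1 - (t:ℂ)*z) = 0 then 0
            else Complex.exp (Complex.log ((t:ℂ) * (1 - (t:ℂ)) * (1 - (t:ℂ)*z)) * (-(1/2):ℂ)) := by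
      funext t
      rw [Complex.cpow_def]
      norm_num
    rw [heq]
    exact (Measurable.ite (hb (measurableSet_singleton 0)) measurable_const
      ((hb.clog.mul measurable_const).cexp)).aestronglyMeasurable
  · rw [Set.uIoc_of_le (zero_le_one : (0:ℝ) ≤ 1)]
    filter_upwards [ae_restrict_mem measurableSet_Ioc] with t ht
    rcases ht.2.eq_or_lt with h1 | h1
    · -- t = 1 : integrand vanishes
      have : (t:ℂ) * (1 - (t:ℂ)) * (1 - (t:ℂ)*z) = 0 := by
        rw [h1]; simp
      rw [this, Complex.zero_cpow (by norm_num : (-(1/2):ℂ) ≠ 0), norm_zero]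
      positivity
    · have ht0 := ht.1
      have hp : 0 < t * (1-t) := mul_pos ht0 (by linarith)
      have hne := lin_ne z hz ht0 h1.le
      have hbne : (t:ℂ) * (1 - (t:ℂ)) * (1 - (t:ℂ)*z) ≠ 0 := by
        rw [base_eq]; exact mul_ne_zero (by exact_mod_cast hp.ne') hne
      have hLHS : ‖((t:ℂ) * (1 - (t:ℂ)) * (1 - (t:ℂ)*z)) ^ (-(1/2):ℂ)‖
          = (t * (1-t) * ‖(1:ℂ) - (t:ℂ)*z‖) ^ (-(1/2):ℝ) := by
        rw [Complex.norm_cpow_of_ne_zero hbne]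
        have : ‖(t:ℂ) * (1 - (t:ℂ)) * (1 - (t:ℂ)*z)‖
            = t * (1-t) * ‖(1:ℂ) - (t:ℂ)*z‖ := by
          rw [base_eq, norm_mul, Complex.norm_real, Real.norm_eq_abs, abs_of_pos hp]
        rw [this]
        norm_num
      have hmin' : c ≤ ‖(1:ℂ) - (t:ℂ)*z‖ := hmin ⟨ht0.le, h1.le⟩
      have hbound : (t * (1-t) * ‖(1:ℂ) - (t:ℂ)*z‖) ^ (-(1/2):ℝ)
          ≤ (t * (1-t) * c) ^ (-(1/2):ℝ) := by
        apply Real.rpow_le_rpow_of_nonpos (mul_pos hp hc0)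
        · exact mul_le_mul_of_nonneg_left hmin' hp.le
        · norm_num
      have hgnorm : ‖(t:ℂ) ^ ((1/2:ℂ)-1) * (1-(t:ℂ)) ^ ((1/2:ℂ)-1)‖
          = (t * (1-t)) ^ (-(1/2):ℝ) := by
        have h1t : (1:ℂ) - (t:ℂ) = ((1-t : ℝ) : ℂ) := by push_cast; ring
        rw [norm_mul, h1t,
          Complex.norm_cpow_eq_rpow_re_of_pos ht0,
          Complex.norm_cpow_eq_rpow_re_of_pos (by linarith : (0:ℝ) < 1 - t),
          ← Real.mul_rpow ht0.le (by linarith)]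
        norm_num
      have hRHS : ‖c ^ (-(1/2):ℝ) * ‖(t:ℂ) ^ ((1/2:ℂ)-1) * (1-(t:ℂ)) ^ ((1/2:ℂ)-1)‖‖
          = (t * (1-t) * c) ^ (-(1/2):ℝ) := by
        rw [hgnorm, Real.norm_eq_abs,
          _root_.abs_of_nonneg (mul_nonneg (Real.rpow_nonneg hc0.le _) (Real.rpow_nonneg hp.le _)),
          Real.mul_rpow hp.le hc0.le]
        ring
      rw [hLHS, hRHS]
      exact hbound

lemma re_integral_pos (z : ℂ) (hz : z.im ≠ 0 ∨ z.re < 1) :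
    0 < (∫ t in (0:ℝ)..1, ((t:ℂ) * (1 - (t:ℂ)) * (1 - (t:ℂ)*z)) ^ (-(1/2):ℂ)).re := by
  have hint := integrable_aux z hz
  have h1 : (∫ t in (0:ℝ)..1, ((t:ℂ) * (1 - (t:ℂ)) * (1 - (t:ℂ)*z)) ^ (-(1/2):ℂ)).re
      = ∫ t in (0:ℝ)..1, (((t:ℂ) * (1 - (t:ℂ)) * (1 - (t:ℂ)*z)) ^ (-(1/2):ℂ)).re := by
    simpa using (Complex.reCLM.intervalIntegral_comp_comm hint).symm
  rw [h1]
  apply intervalIntegral.intervalIntegral_pos_of_pos_on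
  · exact ⟨hint.1.re, hint.2.re⟩
  · intro x hx
    exact integrand_re_pos z hz hx
  · norm_num

lemma im_integral_pos (z : ℂ) (hz : 0 < z.im) :
    0 < (∫ t in (0:ℝ)..1, ((t:ℂ) * (1 - (t:ℂ)) * (1 - (t:ℂ)*z)) ^ (-(1/2):ℂ)).im := by
  have hint := integrable_aux z (Or.inl hz.ne')
  have h1 : (∫ t in (0:ℝ)..1, ((t:ℂ) * (1 - (t:ℂ)) * (1 - (t:ℂ)*z)) ^ (-(1/2):ℂ)).im
      = ∫ t in (0:ℝ)..1, (((t:ℂ) * (1 - (t:ℂ)) * (1 - (t:ℂ)*z)) ^ (-(1/2):ℂ)).im := by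
    simpa using (Complex.imCLM.intervalIntegral_comp_comm hint).symm
  rw [h1]
  apply intervalIntegral.intervalIntegral_pos_of_pos_on
  · exact ⟨hint.1.im, hint.2.im⟩
  · intro x hx
    exact integrand_im_pos z hz hx
  · norm_num

lemma im_integral_neg (z : ℂ) (hz : z.im < 0) :
    (∫ t in (0:ℝ)..1, ((t:ℂ) * (1 - (t:ℂ)) * (1 - (t:ℂ)*z)) ^ (-(1/2):ℂ)).im < 0 := by
  have hint := integrable_aux z (Or.inl hz.ne)
  have h1 : (∫ t in (0:ℝ)..1, ((t:ℂ) * (1 - (t:ℂ)) * (1 - (t:ℂ)*z)) ^ (-(1/2):ℂ)).im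
      = ∫ t in (0:ℝ)..1, (((t:ℂ) * (1 - (t:ℂ)) * (1 - (t:ℂ)*z)) ^ (-(1/2):ℂ)).im := by
    simpa using (Complex.imCLM.intervalIntegral_comp_comm hint).symm
  rw [h1]
  have : 0 < ∫ t in (0:ℝ)..1, (-(((t:ℂ) * (1 - (t:ℂ)) * (1 - (t:ℂ)*z)) ^ (-(1/2):ℂ)).im) := by
    apply intervalIntegral.intervalIntegral_pos_of_pos_on
    · exact ⟨hint.1.im.neg, hint.2.im.neg⟩
    · intro x hx
      simpa using integrand_im_neg z hz hx
    · norm_num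
  rw [intervalIntegral.integral_neg] at this
  linarith

lemma im_integral_zero (x : ℝ) (hx : x < 1) :
    (∫ t in (0:ℝ)..1, ((t:ℂ) * (1 - (t:ℂ)) * (1 - (t:ℂ)*(x:ℂ))) ^ (-(1/2):ℂ)).im = 0 := by
  have hint := integrable_aux (x:ℂ) (Or.inr (by simpa using hx))
  have h1 : (∫ t in (0:ℝ)..1, ((t:ℂ) * (1 - (t:ℂ)) * (1 - (t:ℂ)*(x:ℂ))) ^ (-(1/2):ℂ)).im
      = ∫ t in (0:ℝ)..1, (((t:ℂ) * (1 - (t:ℂ)) * (1 - (t:ℂ)*(x:ℂ))) ^ (-(1/2):ℂ)).im := by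
    simpa using (Complex.imCLM.intervalIntegral_comp_comm hint).symm
  rw [h1]
  have : ∀ t ∈ Set.uIcc (0:ℝ) 1,
      (((t:ℂ) * (1 - (t:ℂ)) * (1 - (t:ℂ)*(x:ℂ))) ^ (-(1/2):ℂ)).im = 0 := by
    intro t ht
    rw [Set.uIcc_of_le (zero_le_one : (0:ℝ) ≤ 1)] at ht
    have h0 : 0 ≤ t * (1-t) * (1 - t*x) := by
      have h2 : 0 ≤ t * (1 - x) := mul_nonneg ht.1 (by linarith)
      have h3 : 0 ≤ 1 - t * x := by nlinarith [ht.2]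
      exact mul_nonneg (mul_nonneg ht.1 (by linarith [ht.2])) h3
    have hcast : (t:ℂ) * (1 - (t:ℂ)) * (1 - (t:ℂ)*(x:ℂ))
        = ((t * (1-t) * (1 - t*x) : ℝ) : ℂ) := by push_cast; ring
    rw [hcast, show (-(1/2):ℂ) = ((-(1/2):ℝ):ℂ) by norm_num,
      ← Complex.ofReal_cpow h0]
    exact Complex.ofReal_im _
  calc (∫ t in (0:ℝ)..1, (((t:ℂ) * (1 - (t:ℂ)) * (1 - (t:ℂ)*(x:ℂ))) ^ (-(1/2):ℂ)).im)
      = ∫ _t in (0:ℝ)..1, (0:ℝ) := intervalIntegral.integral_congr this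
    _ = 0 := by simp

/-- `F = F(1/2,1/2;1;·)` has positive real part (hence is zero-free, with
`|Arg F| < π/2`) on `ℂ \ [1,∞)`; it is real and positive on `(-∞,1)`; and it is a
Nevanlinna–Pick function: `Im F(z) > 0` for `Im z > 0` and `Im F(z) < 0` for `Im z < 0`. -/
theorem stmt0 :
    (∀ z : ℂ, (z.im ≠ 0 ∨ z.re < 1) →
      0 < (Fhyp z).re ∧ Fhyp z ≠ 0 ∧ |(Fhyp z).arg| < Real.pi / 2) ∧
    (∀ x : ℝ, x < 1 → (Fhyp (x : ℂ)).im = 0 ∧ 0 < (Fhyp (x : ℂ)).re) ∧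
    (∀ z : ℂ, 0 < z.im → 0 < (Fhyp z).im) ∧
    (∀ z : ℂ, z.im < 0 → (Fhyp z).im < 0) := by
  have hπ : 0 < (Real.pi)⁻¹ := inv_pos.mpr Real.pi_pos
  have hre : ∀ z : ℂ, (z.im ≠ 0 ∨ z.re < 1) → 0 < (Fhyp z).re := by
    intro z hz
    unfold Fhyp
    rw [← Complex.ofReal_inv, Complex.re_ofReal_mul]
    exact mul_pos hπ (re_integral_pos z hz)
  have him : ∀ z : ℂ, (Fhyp z).im
      = (Real.pi)⁻¹ * (∫ t in (0:ℝ)..1,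
          ((t:ℂ) * (1 - (t:ℂ)) * (1 - (t:ℂ)*z)) ^ (-(1/2):ℂ)).im := by
    intro z
    unfold Fhyp
    rw [← Complex.ofReal_inv, Complex.im_ofReal_mul]
  refine ⟨?_, ?_, ?_, ?_⟩
  · intro z hz
    have h1 := hre z hz
    refine ⟨h1, ?_, ?_⟩
    · intro h
      rw [h] at h1
      simp at h1
    · exact Complex.abs_arg_lt_pi_div_two_iff.mpr (Or.inl h1)
  · intro x hx
    refine ⟨?_, hre _ (Or.inr (by simpa using hx))⟩
    rw [him, im_integral_zero x hx, mul_zero]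
  · intro z hz
    rw [him]
    exact mul_pos hπ (im_integral_pos z hz)
  · intro z hz
    rw [him]
    exact mul_neg_of_pos_of_neg hπ (im_integral_neg z hz)
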